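/- (Theorem 1, case i=4, finite-group version.) For all (x,u,y,v,z) ∈ A⁵ one has ∑_{x′,u′,y′ ∈ A} T(x,x′) · conj(T(u,u′)) · T(y,y′) · D(x′,u′,y′,z,v) = conj(D(x,u,y,v,z)), where conj denotes complex conjugation. -/

import Mathlib

open Finset ComplexConjugate

/-!
Since `T x x' = g x` for `x' = -x` and vanishes otherwise, the left side collapses to
`g x * conj (g u) * g y * D (-x) (-u) (-y) z v`, which carries the same two δ factors as
`conj (D x u y v z)`. So only `u = x + y`, `v = y + z` matters, and there, as `|g| = 1`, the
claim becomes `χ x y * χ (-x) (y + z) = (χ x z)⁻¹`: this holds because `χ`, being symmetric by its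
formula, is a bicharacter.
-/

theorem apply_neg_eq_inv_of_map_add {A M : Type*} [AddGroup A] [GroupWithZero M] {f : A → M}
    (hf0 : f 0 ≠ 0) (hf : ∀ a b, f (a + b) = f a * f b) (a : A) : f (-a) = (f a)⁻¹ := by
  have h0 : f 0 = 1 := (mul_eq_left₀ hf0).1 (by rw [← hf, add_zero])
  exact eq_inv_of_mul_eq_one_right (by rw [← hf, add_neg_cancel, h0])

section Coboundary

variable {A : Type*} [AddCommGroup A] {g : A → ℂ} {χ : A → A → ℂ}

theorem coboundary_symm (hχ : ∀ x y, χ x y = g x * g y * (g (x + y))⁻¹) (x y : A) :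
    χ x y = χ y x := by
  rw [hχ, hχ, add_comm, mul_comm (g x)]

theorem norm_coboundary (hg : ∀ x, ‖g x‖ = 1) (hχ : ∀ x y, χ x y = g x * g y * (g (x + y))⁻¹)
    (x y : A) : ‖χ x y‖ = 1 := by
  simp [hχ, hg]

theorem coboundary_add_right (hχ : ∀ x y, χ x y = g x * g y * (g (x + y))⁻¹)
    (hχ_add : ∀ x x' y, χ (x + x') y = χ x y * χ x' y) (x y z : A) :
    χ x (y + z) = χ x y * χ x z := by
  rw [coboundary_symm hχ, hχ_add, coboundary_symm hχ y, coboundary_symm hχ z]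

theorem mul_conj_mul_mul_coboundary_neg_eq_conj (hg : ∀ x, ‖g x‖ = 1)
    (hχ : ∀ x y, χ x y = g x * g y * (g (x + y))⁻¹)
    (hχ_add : ∀ x x' y, χ (x + x') y = χ x y * χ x' y) (x y z : A) :
    g x * conj (g (x + y)) * g y * χ (-x) (y + z) = conj (χ x z) := by
  have hχ_ne : ∀ a b, χ a b ≠ 0 := fun a b ↦ norm_ne_zero_iff.1 (by simp [norm_coboundary hg hχ])
  have hxy : g x * (g (x + y))⁻¹ * g y = χ x y := by rw [hχ]; ring
  rw [← Complex.inv_eq_conj (hg _), ← Complex.inv_eq_conj (norm_coboundary hg hχ x z),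
    apply_neg_eq_inv_of_map_add (f := (χ · (y + z))) (hχ_ne 0 _) (fun a b ↦ hχ_add a b _),
    coboundary_add_right hχ hχ_add, hxy, mul_inv, mul_inv_cancel_left₀ (hχ_ne x y)]

end Coboundary

theorem pachner_P_symmetry_case_four_general
    {A : Type*} [AddCommGroup A] [Fintype A] [DecidableEq A]
    (g : A → ℂ) (hg_abs : ∀ x, ‖g x‖ = 1)
    (χ : A → A → ℂ) (hχ : ∀ x y, χ x y = g x * g y * (g (x + y))⁻¹)
    (hχ_add : ∀ x x' y, χ (x + x') y = χ x y * χ x' y)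
    (δ : A → ℂ) (hδ : ∀ a, δ a = if a = 0 then 1 else 0)
    (D : A → A → A → A → A → ℂ)
    (hD : ∀ x u y v z, D x u y v z = χ x z * δ (x - u + y) * δ (y - v + z))
    (T : A → A → ℂ) (hT : ∀ x y, T x y = δ (x + y) * g x) :
    ∀ x u y v z : A,
      ∑ x' : A, ∑ u' : A, ∑ y' : A,
          T x x' * (starRingEnd ℂ) (T u u') * T y y' * D x' u' y' z v
        = (starRingEnd ℂ) (D x u y v z) := by
  intro x u y v z
  have hT_ite : ∀ a b, T a b = if b = -a then g a else 0 := fun a b ↦ by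
    simp only [hT, hδ, add_eq_zero_iff_eq_neg', ite_mul, one_mul, zero_mul]
  have hδ_neg : ∀ a, δ (-a) = δ a := fun a ↦ by simp only [hδ, neg_eq_zero]
  have hδ_conj : ∀ a, conj (δ a) = δ a := fun a ↦ by rw [hδ]; split_ifs <;> simp
  simp only [hT_ite, apply_ite conj, map_zero, ite_mul, zero_mul, mul_ite, mul_zero,
    sum_ite_eq', mem_univ, if_true]
  rw [hD, hD, show -x - -u + -y = -(x - u + y) by abel, show -y - z + v = -(y - v + z) by abel,
    hδ_neg, hδ_neg, map_mul, map_mul, hδ_conj, hδ_conj]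
  obtain hu | hu := ne_or_eq (x - u + y) 0
  · simp [hδ, hu]
  obtain hv | hv := ne_or_eq (y - v + z) 0
  · simp [hδ, hv]
  obtain rfl : u = x + y := by linear_combination (norm := abel) -hu
  obtain rfl : v = y + z := by linear_combination (norm := abel) -hv
  rw [← mul_conj_mul_mul_coboundary_neg_eq_conj hg_abs hχ hχ_add x y z]
  ring

/-- Theorem 1, case `i = 4`, finite-group version: P-symmetry relation
`(T ⊗ T⁻¹ ⊗ T ⊗ σ) D = conj D` written out in coordinates. -/
theorem pachner_P_symmetry_case_four
    {A : Type*} [AddCommGroup A] [Fintype A] [DecidableEq A]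
    (g : A → ℂ) (hg_abs : ∀ x, ‖g x‖ = 1) (hg_sym : ∀ x, g (-x) = g x)
    (χ : A → A → ℂ) (hχ : ∀ x y, χ x y = g x * g y * (g (x + y))⁻¹)
    (hχ_add : ∀ x x' y, χ (x + x') y = χ x y * χ x' y)
    (δ : A → ℂ) (hδ : ∀ a, δ a = if a = 0 then 1 else 0)
    (D : A → A → A → A → A → ℂ)
    (hD : ∀ x u y v z, D x u y v z = χ x z * δ (x - u + y) * δ (y - v + z))
    (T : A → A → ℂ) (hT : ∀ x y, T x y = δ (x + y) * g x) :
    ∀ x u y v z : A,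
      ∑ x' : A, ∑ u' : A, ∑ y' : A,
          T x x' * (starRingEnd ℂ) (T u u') * T y y' * D x' u' y' z v
        = (starRingEnd ℂ) (D x u y v z) :=
  pachner_P_symmetry_case_four_general g hg_abs χ hχ hχ_add δ hδ D hD T hT
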